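/- Let K be a field of characteristic zero, let I be an ideal of K[x_1,…,x_n], and let μ ≥ 1. Define the coefficient ideal C(I,μ) := Σ_{i=0}^{μ−1} (D^i(I))^{μ!/(μ−i)} (note μ−i divides μ! for 0 ≤ i ≤ μ−1). Then for every point a ∈ K^n, C(I,μ) ⊆ m_a^{μ!} if and only if I ⊆ m_a^μ; that is, the coefficient ideal, with mark μ!, has the same support as (I,μ). -/

import Mathlib

/-- The maximal ideal of `K[x_i : i ∈ σ]` at the point `a`. -/
noncomputable def maxIdeal (K : Type*) [Field K] (σ : Type*) (a : σ → K) :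
    Ideal (MvPolynomial σ K) :=
  Ideal.span (Set.range fun i => MvPolynomial.X i - MvPolynomial.C (a i))

/-- The derivative ideal `D(I)`: generated by all elements of `I` together with all
their first partial derivatives. -/
noncomputable def derivIdeal {K : Type*} [Field K] {σ : Type*}
    (I : Ideal (MvPolynomial σ K)) : Ideal (MvPolynomial σ K) :=
  Ideal.span ((I : Set (MvPolynomial σ K)) ∪
    {g | ∃ f ∈ I, ∃ j : σ, g = MvPolynomial.pderiv j f})

/-- The iterated derivative ideal `D^i(I)`. -/
noncomputable def derivIdealIter {K : Type*} [Field K] {σ : Type*}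
    (i : ℕ) (I : Ideal (MvPolynomial σ K)) : Ideal (MvPolynomial σ K) :=
  derivIdeal^[i] I

/-- The coefficient ideal `C(I,μ) = Σ_{i=0}^{μ-1} (D^i(I))^{μ!/(μ-i)}`. -/
noncomputable def coeffIdeal {K : Type*} [Field K] {σ : Type*}
    (μ : ℕ) (I : Ideal (MvPolynomial σ K)) : Ideal (MvPolynomial σ K) :=
  ∑ i ∈ Finset.range μ, (derivIdealIter i I) ^ (Nat.factorial μ / (μ - i))

/-!
Both directions reduce to the order of vanishing at `a`. A derivation lowers the order of
vanishing along any ideal by at most one, so `I ⊆ m_a^μ` gives `D^i(I) ⊆ m_a^{μ-i}` and hence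
`C(I,μ) ⊆ m_a^{μ!}`. Conversely, the `i = 0` summand of `C(I,μ)` is `I^{(μ-1)!}`; after
translating `a` to the origin, the order of vanishing is the order of a power series, which is
additive on products, so `f^{(μ-1)!} ∈ m_a^{μ!}` forces `f ∈ m_a^μ`.
-/

open MvPolynomial

theorem Derivation.apply_mem_pow_sub_one {R A : Type*} [CommSemiring R] [CommRing A]
    [Algebra R A] (D : Derivation R A A) (M : Ideal A) {n : ℕ} {x : A} (hx : x ∈ M ^ n) :
    D x ∈ M ^ (n - 1) := by
  induction n generalizing x with
  | zero => simp
  | succ n ih =>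
    rw [pow_succ] at hx
    refine Submodule.mul_induction_on hx (fun a ha b hb => ?_) (fun x y hx hy => ?_)
    · rw [D.leibniz, smul_eq_mul, smul_eq_mul, Nat.add_sub_cancel]
      have hle : M * M ^ (n - 1) ≤ M ^ n := by
        rw [← pow_succ']
        exact Ideal.pow_le_pow_right (by omega)
      exact add_mem (Ideal.mul_mem_right _ _ ha) (hle (Ideal.mul_mem_mul hb (ih ha)))
    · rw [map_add]
      exact add_mem hx hy

theorem MvPowerSeries.order_pow {σ R : Type*} [Semiring R] [NoZeroDivisors R] [Nontrivial R]
    (f : MvPowerSeries σ R) (k : ℕ) : (f ^ k).order = k • f.order := by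
  induction k with
  | zero => rw [pow_zero, zero_smul]; exact weightedOrder_one _
  | succ k ih => rw [pow_succ, MvPowerSeries.order_mul, ih, succ_nsmul]

namespace MvPolynomial

variable {σ R : Type*} [CommSemiring R]

theorem mem_pow_idealOfVars_iff_le_order (n : ℕ) (p : MvPolynomial σ R) :
    p ∈ idealOfVars σ R ^ n ↔ (n : ℕ∞) ≤ (p : MvPowerSeries σ R).order := by
  rw [mem_pow_idealOfVars_iff']
  refine ⟨fun h => MvPowerSeries.nat_le_order fun d hd => (coeff_coe p d).trans (h d hd),
    fun h d hd => ?_⟩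
  rw [← coeff_coe]
  exact MvPowerSeries.coeff_of_lt_order (lt_of_lt_of_le (by exact_mod_cast hd) h)

theorem mem_pow_idealOfVars_of_pow_mem [NoZeroDivisors R] [Nontrivial R]
    {p : MvPolynomial σ R} {k n : ℕ} (hk : k ≠ 0) (h : p ^ k ∈ idealOfVars σ R ^ (k * n)) :
    p ∈ idealOfVars σ R ^ n := by
  rw [mem_pow_idealOfVars_iff_le_order] at h ⊢
  rw [coe_pow, MvPowerSeries.order_pow, nsmul_eq_mul, Nat.cast_mul] at h
  exact (ENat.mul_le_mul_left_iff (by exact_mod_cast hk) (ENat.natCast_ne_top k)).mp h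

end MvPolynomial

section Translation

variable {K σ : Type*} [Field K]

noncomputable def translateAlgEquiv (a : σ → K) : MvPolynomial σ K ≃ₐ[K] MvPolynomial σ K :=
  AlgEquiv.ofAlgHom (aeval fun i => X i + C (a i)) (aeval fun i => X i - C (a i))
    (by ext i; simp) (by ext i; simp)

theorem map_translateAlgEquiv_maxIdeal (a : σ → K) :
    (maxIdeal K σ a).map (translateAlgEquiv a) = idealOfVars σ K := by
  rw [maxIdeal, Ideal.map_span, ← Set.range_comp]
  congr 2
  funext i
  simp [translateAlgEquiv]

theorem mem_maxIdeal_pow_iff (a : σ → K) (n : ℕ) (p : MvPolynomial σ K) :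
    p ∈ maxIdeal K σ a ^ n ↔ translateAlgEquiv a p ∈ idealOfVars σ K ^ n := by
  rw [← map_translateAlgEquiv_maxIdeal, ← Ideal.map_pow]
  exact (Ideal.apply_mem_of_equiv_iff (f := (translateAlgEquiv a).toRingEquiv)).symm

theorem mem_maxIdeal_pow_of_pow_mem {a : σ → K} {p : MvPolynomial σ K} {k n : ℕ} (hk : k ≠ 0)
    (h : p ^ k ∈ maxIdeal K σ a ^ (k * n)) : p ∈ maxIdeal K σ a ^ n := by
  rw [mem_maxIdeal_pow_iff, map_pow] at h
  rw [mem_maxIdeal_pow_iff]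
  exact mem_pow_idealOfVars_of_pow_mem hk h

end Translation

section CoeffIdeal

variable {K σ : Type*} [Field K] {I M : Ideal (MvPolynomial σ K)}

theorem derivIdeal_le_pow {n : ℕ} (h : I ≤ M ^ n) : derivIdeal I ≤ M ^ (n - 1) := by
  rw [derivIdeal, Ideal.span_le]
  rintro g (hg | ⟨f, hf, j, rfl⟩)
  · exact Ideal.pow_le_pow_right (Nat.sub_le n 1) (h hg)
  · exact (pderiv j).apply_mem_pow_sub_one M (h hf)

theorem derivIdealIter_le_pow {n : ℕ} (h : I ≤ M ^ n) (i : ℕ) :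
    derivIdealIter i I ≤ M ^ (n - i) := by
  induction i with
  | zero => exact h
  | succ i ih =>
    rw [derivIdealIter, Function.iterate_succ_apply', Nat.sub_succ']
    exact derivIdeal_le_pow ih

theorem coeffIdeal_le_pow_factorial {μ : ℕ} (h : I ≤ M ^ μ) :
    coeffIdeal μ I ≤ M ^ μ.factorial := by
  rw [coeffIdeal, Ideal.sum_eq_sup]
  refine Finset.sup_le fun i hi => ?_
  have hdvd : μ - i ∣ μ.factorial :=
    Nat.dvd_factorial (by simp at hi; omega) (Nat.sub_le μ i)
  calc derivIdealIter i I ^ (μ.factorial / (μ - i))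
      ≤ (M ^ (μ - i)) ^ (μ.factorial / (μ - i)) :=
        Ideal.pow_right_mono (derivIdealIter_le_pow h i) _
    _ = M ^ μ.factorial := by rw [← pow_mul, Nat.mul_div_cancel' hdvd]

theorem pow_le_coeffIdeal {μ : ℕ} (hμ : 0 < μ) :
    I ^ (μ.factorial / μ) ≤ coeffIdeal μ I := by
  rw [coeffIdeal, Ideal.sum_eq_sup]
  exact Finset.le_sup (f := fun i => derivIdealIter i I ^ (μ.factorial / (μ - i)))
    (Finset.mem_range.mpr hμ)

end CoeffIdeal

theorem supp_coeffIdeal_general (K : Type*) [Field K] (n : ℕ)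
    (I : Ideal (MvPolynomial (Fin n) K)) (μ : ℕ) (a : Fin n → K) :
    coeffIdeal μ I ≤ maxIdeal K (Fin n) a ^ (Nat.factorial μ) ↔
      I ≤ maxIdeal K (Fin n) a ^ μ := by
  refine ⟨fun h f hf => ?_, coeffIdeal_le_pow_factorial⟩
  rcases Nat.eq_zero_or_pos μ with rfl | hμ
  · simp
  have hdvd : μ ∣ μ.factorial := Nat.dvd_factorial hμ le_rfl
  have hk : μ.factorial / μ ≠ 0 := (Nat.div_pos (Nat.le_of_dvd μ.factorial_pos hdvd) hμ).ne'
  refine mem_maxIdeal_pow_of_pow_mem hk ?_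
  rw [Nat.div_mul_cancel hdvd]
  exact h (pow_le_coeffIdeal hμ (Ideal.pow_mem_pow hf _))

/-- The coefficient ideal `C(I,μ)` with mark `μ!` has the same support as `(I,μ)`:
`C(I,μ) ⊆ m_a^{μ!} ↔ I ⊆ m_a^μ` for every point `a`. -/
theorem supp_coeffIdeal (K : Type*) [Field K] [CharZero K] (n : ℕ)
    (I : Ideal (MvPolynomial (Fin n) K)) (μ : ℕ) (hμ : 1 ≤ μ) (a : Fin n → K) :
    coeffIdeal μ I ≤ maxIdeal K (Fin n) a ^ (Nat.factorial μ) ↔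
      I ≤ maxIdeal K (Fin n) a ^ μ :=
  supp_coeffIdeal_general K n I μ a
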